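/- For every τ in the complex upper half-plane (with q = exp(2πiτ)) and every z ∈ ℂ, one has exp(−πi·z) · G(exp(2πi·z), q) = 2πi · θ(−z, τ) / θ′(0, τ). -/

import Mathlib

/-!
Both sides factor through the `q`-Pochhammer symbol `(a; q)_∞ = ∏ₙ (1 - a qⁿ)`:
`G(y, q) = (1 - y) (yq; q)_∞ (q/y; q)_∞ / (q; q)_∞²`, while the triple product reads
`θ(z, τ) = e^{πiτ/4} · 2 sin(πz) · (q; q)_∞ (q e^{2πiz}; q)_∞ (q e^{-2πiz}; q)_∞`.
As `sin(πz)` vanishes at `0`, only its derivative contributes to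
`θ′(0, τ) = 2π e^{πiτ/4} (q; q)_∞³`, and the remaining factor is
`e^{-πiz} (1 - e^{2πiz}) = 2i sin(-πz)`.
-/

open Complex Real

/-- The Jacobi theta function, defined by the triple product
`θ(z,τ) = exp(πiτ/4) · 2 sin(πz) · ∏_{l≥1} (1-q^l)(1-q^l e^{2πiz})(1-q^l e^{-2πiz})`
where `q = exp(2πiτ)`. -/
noncomputable def jacobiThetaProd (z τ : ℂ) : ℂ :=
  Complex.exp ((π : ℂ) * I * τ / 4) * (2 * Complex.sin ((π : ℂ) * z)) *
    ∏' l : ℕ,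
      (1 - Complex.exp (2 * (π : ℂ) * I * τ) ^ (l + 1)) *
      (1 - Complex.exp (2 * (π : ℂ) * I * τ) ^ (l + 1) * Complex.exp (2 * (π : ℂ) * I * z)) *
      (1 - Complex.exp (2 * (π : ℂ) * I * τ) ^ (l + 1) * Complex.exp (-(2 * (π : ℂ) * I * z)))

/-- `θ′(0,τ)`: the derivative of the Jacobi theta function in its first variable at `z = 0`. -/
noncomputable def jacobiThetaProdDeriv (τ : ℂ) : ℂ :=
  deriv (fun z => jacobiThetaProd z τ) 0

/-- `G(y,q) = ∏_{k≥1} (1 - y q^{k-1})(1 - y⁻¹ q^k)/(1 - q^k)²`. -/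
noncomputable def Gfun (y q : ℂ) : ℂ :=
  ∏' k : ℕ, (1 - y * q ^ k) * (1 - y⁻¹ * q ^ (k + 1)) / (1 - q ^ (k + 1)) ^ 2

noncomputable def qPochhammer (a q : ℂ) : ℂ :=
  ∏' n : ℕ, (1 - a * q ^ n)

section

variable {q : ℂ}

lemma summable_norm_mul_pow (hq : ‖q‖ < 1) (a : ℂ) : Summable fun n : ℕ => ‖a * q ^ n‖ := by
  simpa [norm_mul, norm_pow] using
    (summable_geometric_of_lt_one (norm_nonneg q) hq).mul_left ‖a‖

lemma multipliable_one_sub_mul_pow (hq : ‖q‖ < 1) (a : ℂ) :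
    Multipliable fun n : ℕ => 1 - a * q ^ n := by
  simpa [sub_eq_add_neg] using
    multipliable_one_add_of_summable (f := fun n : ℕ => -(a * q ^ n))
      (by simpa using summable_norm_mul_pow hq a)

lemma multipliable_one_sub_mul_pow_succ (hq : ‖q‖ < 1) (a : ℂ) :
    Multipliable fun n : ℕ => 1 - a * q ^ (n + 1) := by
  simpa only [pow_succ', mul_assoc] using multipliable_one_sub_mul_pow hq (a * q)

lemma qPochhammer_mul_self_eq_tprod (a : ℂ) :
    qPochhammer (a * q) q = ∏' n : ℕ, (1 - a * q ^ (n + 1)) := by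
  simp only [qPochhammer, pow_succ', mul_assoc]

lemma qPochhammer_self_eq_tprod : qPochhammer q q = ∏' n : ℕ, (1 - q ^ (n + 1)) := by
  simpa using qPochhammer_mul_self_eq_tprod (q := q) 1

lemma qPochhammer_eq_one_sub_mul (hq : ‖q‖ < 1) (a : ℂ) :
    qPochhammer a q = (1 - a) * qPochhammer (a * q) q := by
  rw [qPochhammer, tprod_eq_zero_mul' (f := fun n => 1 - a * q ^ n)
      (multipliable_one_sub_mul_pow_succ hq a),
    qPochhammer_mul_self_eq_tprod, pow_zero, mul_one]

lemma qPochhammer_ne_zero (hq : ‖q‖ < 1) {a : ℂ} (ha : ∀ n : ℕ, a * q ^ n ≠ 1) :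
    qPochhammer a q ≠ 0 := by
  simpa [qPochhammer, sub_eq_add_neg] using
    tprod_one_add_ne_zero_of_summable (f := fun n : ℕ => -(a * q ^ n))
      (fun n => by rw [← sub_eq_add_neg]; exact sub_ne_zero.mpr (ha n).symm)
      (by simpa using summable_norm_mul_pow hq a)

lemma qPochhammer_self_ne_zero (hq : ‖q‖ < 1) : qPochhammer q q ≠ 0 := by
  refine qPochhammer_ne_zero hq fun n h => ?_
  have : ‖q * q ^ n‖ < 1 := by
    rw [← pow_succ', norm_pow]
    exact pow_lt_one₀ (norm_nonneg q) hq n.succ_ne_zero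
  simp [h] at this

lemma differentiable_qPochhammer (hq : ‖q‖ < 1) :
    Differentiable ℂ fun a => qPochhammer a q := by
  intro a
  have hball : Metric.ball (0 : ℂ) (‖a‖ + 1) ∈ nhds a := Metric.isOpen_ball.mem_nhds (by simp)
  refine DifferentiableOn.differentiableAt ?_ hball
  have hprod := Summable.hasProdLocallyUniformlyOn_nat_one_add (f := fun n (b : ℂ) => -(b * q ^ n))
    Metric.isOpen_ball
    ((summable_geometric_of_lt_one (norm_nonneg q) hq).mul_left (‖a‖ + 1))
    (Filter.Eventually.of_forall fun n b hb => by
      simp only [norm_neg, norm_mul, norm_pow]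
      exact mul_le_mul_of_nonneg_right (mem_ball_zero_iff.mp hb).le (by positivity))
    (fun n => by fun_prop)
  simp only [← sub_eq_add_neg] at hprod
  exact hprod.differentiableOn (Filter.Eventually.of_forall fun s => by fun_prop) Metric.isOpen_ball

end

lemma norm_cexp_two_pi_I_mul_lt_one {τ : ℂ} (hτ : 0 < τ.im) : ‖cexp (2 * π * I * τ)‖ < 1 :=
  UpperHalfPlane.norm_exp_two_pi_I_lt_one ⟨τ, hτ⟩

lemma Gfun_eq_qPochhammer {q : ℂ} (hq : ‖q‖ < 1) (y : ℂ) :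
    Gfun y q = (1 - y) * qPochhammer (y * q) q * qPochhammer (y⁻¹ * q) q /
      qPochhammer q q ^ 2 := by
  have hA := multipliable_one_sub_mul_pow hq y
  have hB := multipliable_one_sub_mul_pow_succ hq y⁻¹
  have hC := ModularForm.multipliable_one_sub_pow hq
  have hCne : ∏' k : ℕ, (1 - q ^ (k + 1)) ^ 2 ≠ 0 := by
    rw [hC.tprod_pow, ← qPochhammer_self_eq_tprod]
    exact pow_ne_zero 2 (qPochhammer_self_ne_zero hq)
  rw [Gfun, (hA.mul hB).tprod_div₀ (hC.pow 2) hCne, hA.tprod_mul hB, hC.tprod_pow,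
    ← qPochhammer, ← qPochhammer_self_eq_tprod, ← qPochhammer_mul_self_eq_tprod,
    qPochhammer_eq_one_sub_mul hq]

lemma jacobiThetaProd_eq_qPochhammer {τ : ℂ} (hτ : 0 < τ.im) (z : ℂ) :
    jacobiThetaProd z τ = cexp (π * I * τ / 4) * (2 * Complex.sin (π * z)) *
      (qPochhammer (cexp (2 * π * I * τ)) (cexp (2 * π * I * τ)) *
        qPochhammer (cexp (2 * π * I * z) * cexp (2 * π * I * τ)) (cexp (2 * π * I * τ)) *
        qPochhammer (cexp (-(2 * π * I * z)) * cexp (2 * π * I * τ)) (cexp (2 * π * I * τ))) := by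
  have hq := norm_cexp_two_pi_I_mul_lt_one hτ
  rw [jacobiThetaProd]
  set q := cexp (2 * π * I * τ)
  have hC := ModularForm.multipliable_one_sub_pow hq
  rw [qPochhammer_self_eq_tprod, qPochhammer_mul_self_eq_tprod, qPochhammer_mul_self_eq_tprod,
    ← hC.tprod_mul (multipliable_one_sub_mul_pow_succ hq _),
    ← (hC.mul (multipliable_one_sub_mul_pow_succ hq _)).tprod_mul
      (multipliable_one_sub_mul_pow_succ hq _)]
  congr 2
  funext l
  ring

lemma hasDerivAt_jacobiThetaProd_zero {τ : ℂ} (hτ : 0 < τ.im) :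
    HasDerivAt (fun z => jacobiThetaProd z τ)
      (cexp (π * I * τ / 4) * (2 * π) *
        qPochhammer (cexp (2 * π * I * τ)) (cexp (2 * π * I * τ)) ^ 3) 0 := by
  have hq := norm_cexp_two_pi_I_mul_lt_one hτ
  set q := cexp (2 * π * I * τ)
  have hprod : DifferentiableAt ℂ (fun z : ℂ => qPochhammer q q *
      qPochhammer (cexp (2 * π * I * z) * q) q * qPochhammer (cexp (-(2 * π * I * z)) * q) q) 0 := by
    have := differentiable_qPochhammer hq
    fun_prop
  have hsin : HasDerivAt (fun z : ℂ => cexp (π * I * τ / 4) * (2 * Complex.sin (π * z)))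
      (cexp (π * I * τ / 4) * (2 * (Complex.cos (π * 0) * (π * 1)))) 0 :=
    (((hasDerivAt_id' 0).const_mul (π : ℂ)).csin.const_mul 2).const_mul _
  rw [show (fun z => jacobiThetaProd z τ) = _ from funext (jacobiThetaProd_eq_qPochhammer hτ)]
  refine (hsin.mul hprod.hasDerivAt).congr_deriv ?_
  simp only [mul_zero, neg_zero, Complex.exp_zero, Complex.sin_zero, Complex.cos_zero, one_mul,
    mul_one, zero_mul, add_zero]
  ring

lemma cexp_neg_mul_one_sub_cexp (z : ℂ) :
    cexp (-(π * I * z)) * (1 - cexp (2 * π * I * z)) = 2 * I * Complex.sin (π * -z) := by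
  rw [Complex.sin, mul_sub, mul_one, ← Complex.exp_add]
  ring_nf
  rw [Complex.I_sq]
  ring_nf

/-- `exp(−πiz)·G(exp(2πiz), q) = 2πi·θ(−z,τ)/θ′(0,τ)` for `q = exp(2πiτ)`. -/
theorem G_eq_theta_ratio (τ : ℂ) (hτ : 0 < τ.im) (z : ℂ) :
    Complex.exp (-((π : ℂ) * I * z)) *
        Gfun (Complex.exp (2 * (π : ℂ) * I * z)) (Complex.exp (2 * (π : ℂ) * I * τ)) =
      2 * (π : ℂ) * I * jacobiThetaProd (-z) τ / jacobiThetaProdDeriv τ := by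
  have hq := norm_cexp_two_pi_I_mul_lt_one hτ
  have hP := qPochhammer_self_ne_zero hq
  rw [Gfun_eq_qPochhammer hq, jacobiThetaProd_eq_qPochhammer hτ, jacobiThetaProdDeriv,
    (hasDerivAt_jacobiThetaProd_zero hτ).deriv, mul_div_assoc', ← mul_assoc, ← mul_assoc,
    cexp_neg_mul_one_sub_cexp]
  simp only [mul_neg, neg_neg, Complex.exp_neg]
  field_simp
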